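/- Let ν be a probability measure on {−1,1}^n, let c ∈ (0,1] and ε > 0, and suppose ‖m(T_v ν) − m(ν)‖_2 ≤ ε‖v‖_2 for all v ∈ Sparse_c. Then for every v ∈ Sparse_c, log E_ν[e^{⟨v,X⟩}] − ⟨m(ν), v⟩ ≤ (ε/2)·‖v‖_2². -/

import Mathlib

open scoped BigOperators Classical

noncomputable section

/-- The ±1 value of a Boolean coordinate. -/
def sgn (b : Bool) : ℝ := if b then 1 else -1

/-- `μ` is a probability mass function on the finite type `Ω`. -/
def IsProb {Ω : Type*} [Fintype Ω] (μ : Ω → ℝ) : Prop :=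
  (∀ ω, 0 ≤ μ ω) ∧ ∑ ω, μ ω = 1

/-- KL divergence (with the convention `0 · log 0 = 0`, valid under `μ ≪ ν`). -/
def KL {Ω : Type*} [Fintype Ω] (μ ν : Ω → ℝ) : ℝ :=
  ∑ ω, μ ω * Real.log (μ ω / ν ω)

variable {ι : Type*} [Fintype ι] [DecidableEq ι]

/-- Mean vector of a measure on the cube `{−1,1}^ι`. -/
def meanVec (ν : (ι → Bool) → ℝ) (i : ι) : ℝ := ∑ x, ν x * sgn (x i)

/-- Covariance matrix entries. -/
def covMat (ν : (ι → Bool) → ℝ) (i j : ι) : ℝ :=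
  ∑ x, ν x * (sgn (x i) - meanVec ν i) * (sgn (x j) - meanVec ν j)

/-- Variance of coordinate `i`. -/
def varCoord (ν : (ι → Bool) → ℝ) (i : ι) : ℝ := covMat ν i i

/-- Influence matrix `Ψ(ν) = Cov(ν) · diag(Var)⁻¹`; inactive rows/columns vanish
(by the convention `x / 0 = 0`), so its operator norm is the operator norm on the
active subspace. -/
def Psi (ν : (ι → Bool) → ℝ) : Matrix ι ι ℝ :=
  fun i j => covMat ν i j / varCoord ν j

/-- Correlation matrix `Cor(ν) = diag(Var)^{-1/2} · Cov(ν) · diag(Var)^{-1/2}`. -/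
def Cor (ν : (ι → Bool) → ℝ) : Matrix ι ι ℝ :=
  fun i j => covMat ν i j / (Real.sqrt (varCoord ν i) * Real.sqrt (varCoord ν j))

/-- ℓ²→ℓ² operator norm of a matrix. -/
def opNorm (M : Matrix ι ι ℝ) : ℝ := ‖Matrix.toEuclideanCLM (𝕜 := ℝ) M‖

/-- The event described by the pinning `u` (`none` = unpinned, `some b` = pinned to `b`). -/
def pinEvent (u : ι → Option Bool) (x : ι → Bool) : Prop :=
  ∀ i, ∀ b, u i = some b → x i = b

/-- Probability mass of the pinning event. -/
def pinMass (ν : (ι → Bool) → ℝ) (u : ι → Option Bool) : ℝ :=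
  ∑ x ∈ Finset.univ.filter (fun x => pinEvent u x), ν x

/-- The pinned (conditioned) measure `R_u ν`. -/
def pin (ν : (ι → Bool) → ℝ) (u : ι → Option Bool) : (ι → Bool) → ℝ :=
  fun x => if pinEvent u x then ν x / pinMass ν u else 0

/-- Number of pinned coordinates. -/
def suppSize (u : ι → Option Bool) : ℕ :=
  (Finset.univ.filter (fun i => u i ≠ none)).card

/-- The tilt `T_v ν`. -/
def tilt (v : ι → ℝ) (ν : (ι → Bool) → ℝ) : (ι → Bool) → ℝ :=
  fun x => Real.exp (∑ i, v i * sgn (x i)) * ν x /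
    ∑ y, Real.exp (∑ i, v i * sgn (y i)) * ν y

/-- `v` has at most `⌈c·n⌉` nonzero coordinates. -/
def sparseSupp (c : ℝ) (n : ℕ) (v : Fin n → ℝ) : Prop :=
  (Finset.univ.filter (fun i => v i ≠ 0)).card ≤ ⌈c * n⌉₊


/-! The function `f(t) = log E_ν[e^{t⟨v,X⟩}]` has `f(0) = 0` and `f'(t) = ⟨m(T_{tv} ν), v⟩`.
Since `tv` is sparse, Cauchy–Schwarz and the hypothesis give `f'(t) - ⟨m(ν), v⟩ ≤ ε t ‖v‖²`, and
integrating over `t ∈ [0, 1]` yields the bound. -/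

lemma IsProb.exists_pos {Ω : Type*} [Fintype Ω] {μ : Ω → ℝ} (hμ : IsProb μ) : ∃ ω, 0 < μ ω := by
  by_contra! h
  have : ∑ ω, μ ω = 0 := Finset.sum_eq_zero fun ω _ => le_antisymm (h ω) (hμ.1 ω)
  simp [hμ.2] at this

lemma sub_le_of_hasDerivAt_le_affine {f f' : ℝ → ℝ} {a b : ℝ}
    (hf : ∀ t, HasDerivAt f (f' t) t) (hf' : ∀ t ∈ Set.Ioo (0 : ℝ) 1, f' t ≤ a + b * t) :
    f 1 - f 0 ≤ a + b / 2 := by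
  set g : ℝ → ℝ := fun t => f t - a * t - b / 2 * t ^ 2
  have hg : ∀ t, HasDerivAt g (f' t - a - b * t) t := fun t => by
    refine (((hf t).sub ((hasDerivAt_id t).const_mul a)).sub
      ((hasDerivAt_pow 2 t).const_mul (b / 2))).congr_deriv ?_
    norm_num
    ring
  have hanti : AntitoneOn g (Set.Icc 0 1) := by
    refine antitoneOn_of_hasDerivWithinAt_nonpos (convex_Icc 0 1)
      (fun t _ => (hg t).continuousAt.continuousWithinAt) (fun t _ => (hg t).hasDerivWithinAt)
      fun t ht => ?_
    rw [interior_Icc] at ht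
    linarith [hf' t ht]
  have := hanti (Set.left_mem_Icc.2 zero_le_one) (Set.right_mem_Icc.2 zero_le_one) zero_le_one
  simp only [g] at this
  linarith

section LogLaplace

variable {κ : Type*} [Fintype κ]

lemma sum_mul_le_of_sqrt_sum_sub_sq_le {p q v : κ → ℝ} {δ : ℝ}
    (h : √(∑ i, (p i - q i) ^ 2) ≤ δ * √(∑ i, v i ^ 2)) :
    ∑ i, p i * v i ≤ ∑ i, q i * v i + δ * ∑ i, v i ^ 2 := by
  have hsq : √(∑ i, v i ^ 2) * √(∑ i, v i ^ 2) = ∑ i, v i ^ 2 :=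
    Real.mul_self_sqrt (Finset.sum_nonneg fun i _ => sq_nonneg _)
  have : ∑ i, (p i - q i) * v i ≤ δ * ∑ i, v i ^ 2 :=
    calc ∑ i, (p i - q i) * v i ≤ √(∑ i, (p i - q i) ^ 2) * √(∑ i, v i ^ 2) :=
          Real.sum_mul_le_sqrt_mul_sqrt _ _ _
      _ ≤ δ * √(∑ i, v i ^ 2) * √(∑ i, v i ^ 2) :=
          mul_le_mul_of_nonneg_right h (Real.sqrt_nonneg _)
      _ = δ * ∑ i, v i ^ 2 := by rw [mul_assoc, hsq]
  simp only [sub_mul, Finset.sum_sub_distrib] at this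
  linarith

lemma sqrt_sum_smul_sq {t : ℝ} (ht : 0 ≤ t) (v : κ → ℝ) :
    √(∑ i, (t • v) i ^ 2) = t * √(∑ i, v i ^ 2) := by
  simp only [Pi.smul_apply, smul_eq_mul, mul_pow, ← Finset.mul_sum]
  rw [Real.sqrt_mul (sq_nonneg t), Real.sqrt_sq ht]

def cubeInner (v : κ → ℝ) (x : κ → Bool) : ℝ := ∑ i, v i * sgn (x i)

lemma cubeInner_smul (t : ℝ) (v : κ → ℝ) (x : κ → Bool) :
    cubeInner (t • v) x = t * cubeInner v x := by
  simp only [cubeInner, Pi.smul_apply, smul_eq_mul, Finset.mul_sum, mul_assoc]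

variable [DecidableEq κ]

def laplace (ν : (κ → Bool) → ℝ) (v : κ → ℝ) : ℝ := ∑ x, Real.exp (cubeInner v x) * ν x

lemma laplace_pos {ν : (κ → Bool) → ℝ} (hν : IsProb ν) (v : κ → ℝ) : 0 < laplace ν v := by
  obtain ⟨x, hx⟩ := hν.exists_pos
  exact Finset.sum_pos' (fun y _ => mul_nonneg (Real.exp_pos _).le (hν.1 y))
    ⟨x, Finset.mem_univ x, mul_pos (Real.exp_pos _) hx⟩

lemma laplace_zero {ν : (κ → Bool) → ℝ} (hν : IsProb ν) : laplace ν 0 = 1 := by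
  simpa [laplace, cubeInner] using hν.2

lemma sum_meanVec_tilt_mul (ν : (κ → Bool) → ℝ) (w v : κ → ℝ) :
    ∑ i, meanVec (tilt w ν) i * v i
      = (∑ x, Real.exp (cubeInner w x) * ν x * cubeInner v x) / laplace ν w := by
  simp only [meanVec, tilt, cubeInner, laplace, Finset.sum_div, Finset.sum_mul, Finset.mul_sum]
  rw [Finset.sum_comm]
  refine Finset.sum_congr rfl fun x _ => Finset.sum_congr rfl fun i _ => ?_
  ring

lemma hasDerivAt_laplace_smul (ν : (κ → Bool) → ℝ) (v : κ → ℝ) (t : ℝ) :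
    HasDerivAt (fun s : ℝ => laplace ν (s • v))
      (∑ x, Real.exp (cubeInner (t • v) x) * ν x * cubeInner v x) t := by
  simp only [laplace, cubeInner_smul]
  refine HasDerivAt.fun_sum fun x _ => ?_
  exact (((hasDerivAt_mul_const (cubeInner v x)).exp).mul_const (ν x)).congr_deriv (by ring)

lemma hasDerivAt_log_laplace_smul {ν : (κ → Bool) → ℝ} (hν : IsProb ν) (v : κ → ℝ) (t : ℝ) :
    HasDerivAt (fun s : ℝ => Real.log (laplace ν (s • v)))
      (∑ i, meanVec (tilt (t • v) ν) i * v i) t := by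
  rw [sum_meanVec_tilt_mul]
  exact (hasDerivAt_laplace_smul ν v t).log (laplace_pos hν _).ne'

end LogLaplace

lemma sparseSupp.smul {c : ℝ} {n : ℕ} {v : Fin n → ℝ} (hv : sparseSupp c n v) (t : ℝ) :
    sparseSupp c n (t • v) := by
  refine le_trans (Finset.card_le_card fun i => ?_) hv
  simp only [Finset.mem_filter, Finset.mem_univ, true_and, Pi.smul_apply, smul_eq_mul]
  exact right_ne_zero_of_mul

theorem logLaplace_bound_on_sparse_general
    (n : ℕ) (ν : (Fin n → Bool) → ℝ) (hν : IsProb ν)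
    (c ε : ℝ)
    (hlip : ∀ v : Fin n → ℝ, sparseSupp c n v →
      Real.sqrt (∑ i, (meanVec (tilt v ν) i - meanVec ν i) ^ 2)
        ≤ ε * Real.sqrt (∑ i, v i ^ 2)) :
    ∀ v : Fin n → ℝ, sparseSupp c n v →
      Real.log (∑ x, Real.exp (∑ i, v i * sgn (x i)) * ν x) - (∑ i, meanVec ν i * v i)
        ≤ ε / 2 * ∑ i, v i ^ 2 := by
  intro v hv
  have hderiv : ∀ t ∈ Set.Ioo (0 : ℝ) 1, ∑ i, meanVec (tilt (t • v) ν) i * v i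
      ≤ ∑ i, meanVec ν i * v i + ε * (∑ i, v i ^ 2) * t := fun t ht => by
    have h := hlip (t • v) (hv.smul t)
    rw [sqrt_sum_smul_sq ht.1.le, ← mul_assoc] at h
    exact (sum_mul_le_of_sqrt_sum_sub_sq_le h).trans_eq (by ring)
  have hf := sub_le_of_hasDerivAt_le_affine (hasDerivAt_log_laplace_smul hν v) hderiv
  simp only [zero_smul, one_smul, laplace_zero hν, Real.log_one] at hf
  unfold laplace cubeInner at hf
  linarith

/-- Bound on the centered log-Laplace transform on sparse vectors.
If ‖m(T_v ν) − m(ν)‖₂ ≤ ε‖v‖₂ for all sparse v, then for every sparse v,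
log E_ν[e^{⟨v,X⟩}] − ⟨m(ν),v⟩ ≤ (ε/2)‖v‖₂². -/
theorem logLaplace_bound_on_sparse
    (n : ℕ) (ν : (Fin n → Bool) → ℝ) (hν : IsProb ν)
    (c ε : ℝ) (hc0 : 0 < c) (hc1 : c ≤ 1) (hε : 0 < ε)
    (hlip : ∀ v : Fin n → ℝ, sparseSupp c n v →
      Real.sqrt (∑ i, (meanVec (tilt v ν) i - meanVec ν i) ^ 2)
        ≤ ε * Real.sqrt (∑ i, v i ^ 2)) :
    ∀ v : Fin n → ℝ, sparseSupp c n v →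
      Real.log (∑ x, Real.exp (∑ i, v i * sgn (x i)) * ν x) - (∑ i, meanVec ν i * v i)
        ≤ ε / 2 * ∑ i, v i ^ 2 :=
  logLaplace_bound_on_sparse_general n ν hν c ε hlip

end
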